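/- Let n, α, β be real numbers and let a be a twice differentiable real-valued function on (−1,1). Then for every τ ∈ (−1,1), D_{(n,α,β)}( ((1−τ)/2)^{−α} a(τ) ) = ((1−τ)/2)^{−α} · (D_{(n+α,−α,β)} a)(τ), where on the left-hand side the operator D_{(n,α,β)} is applied to the function τ ↦ ((1−τ)/2)^{−α} a(τ). -/

import Mathlib

/-!
With `w τ = ((1 - τ) / 2) ^ (-α)` one has `w' = α / (1 - τ) · w` and
`w'' = α (α + 1) / (1 - τ)² · w`. Leibniz's rule therefore gives `D_{(n,α,β)} (w a) = w · L a` for a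
second-order operator `L`; since `1 - τ²` is divisible by `1 - τ`, the coefficients of `L` are
polynomial, and they turn out to be those of `D_{(n+α,-α,β)}`.
-/

/-- The Jacobi differential operator
`(D_{(n,α,β)} a)(τ) = (1−τ²)a''(τ) + (β − α − (α+β+2)τ)a'(τ) + n(n+α+β+1)a(τ)`. -/
noncomputable def jacobiD (n α β : ℝ) (a : ℝ → ℝ) (τ : ℝ) : ℝ :=
  (1 - τ ^ 2) * deriv (deriv a) τ + (β - α - (α + β + 2) * τ) * deriv a τ
    + n * (n + α + β + 1) * a τ

open Filter Topology

theorem deriv_deriv_mul {𝕜 𝔸 : Type*} [NontriviallyNormedField 𝕜] [NormedCommRing 𝔸]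
    [NormedAlgebra 𝕜 𝔸] {f g : 𝕜 → 𝔸} {x : 𝕜}
    (hf : ∀ᶠ y in 𝓝 x, DifferentiableAt 𝕜 f y) (hg : ∀ᶠ y in 𝓝 x, DifferentiableAt 𝕜 g y)
    (hf' : DifferentiableAt 𝕜 (deriv f) x) (hg' : DifferentiableAt 𝕜 (deriv g) x) :
    deriv (deriv fun y => f y * g y) x =
      deriv (deriv f) x * g x + 2 * (deriv f x * deriv g x) + f x * deriv (deriv g) x := by
  have hderiv : deriv (fun y => f y * g y) =ᶠ[𝓝 x] fun y => deriv f y * g y + f y * deriv g y := by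
    filter_upwards [hf, hg] with y hfy hgy using deriv_fun_mul hfy hgy
  rw [hderiv.deriv_eq, ((hf'.hasDerivAt.fun_mul hg.self_of_nhds.hasDerivAt).fun_add
    (hf.self_of_nhds.hasDerivAt.fun_mul hg'.hasDerivAt)).deriv]
  ring

theorem hasDerivAt_half_one_sub_rpow (c : ℝ) {t : ℝ} (ht : t < 1) :
    HasDerivAt (fun s => ((1 - s) / 2) ^ c) (-c / (1 - t) * ((1 - t) / 2) ^ c) t := by
  have hpos : 0 < (1 - t) / 2 := by linarith
  have h := (((hasDerivAt_id' t).const_sub 1).div_const 2).rpow_const (p := c) (Or.inl hpos.ne')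
  convert h using 1
  rw [Real.rpow_sub_one hpos.ne']
  field_simp

theorem hasDerivAt_deriv_half_one_sub_rpow (c : ℝ) {t : ℝ} (ht : t < 1) :
    HasDerivAt (deriv fun s => ((1 - s) / 2) ^ c)
      (c * (c - 1) / (1 - t) ^ 2 * ((1 - t) / 2) ^ c) t := by
  have hderiv : deriv (fun s => ((1 - s) / 2) ^ c) =ᶠ[𝓝 t]
      fun s => -c / (1 - s) * ((1 - s) / 2) ^ c := by
    filter_upwards [Iio_mem_nhds ht] with s hs using (hasDerivAt_half_one_sub_rpow c hs).deriv
  have hne : 1 - t ≠ 0 := by linarith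
  have hquot : HasDerivAt (fun s => -c / (1 - s)) (-c / (1 - t) ^ 2) t := by
    simpa [div_eq_mul_inv] using ((hasDerivAt_id' t).const_sub 1).inv hne |>.const_mul (-c)
  refine ((hquot.fun_mul (hasDerivAt_half_one_sub_rpow c ht)).congr_of_eventuallyEq
    hderiv).congr_deriv ?_
  field_simp
  ring

/-- Symmetry of the Jacobi operator:
`D_{(n,α,β)}(((1−τ)/2)^{−α} a(τ)) = ((1−τ)/2)^{−α} (D_{(n+α,−α,β)} a)(τ)` on `(−1,1)`. -/
theorem stmt3 (n α β : ℝ) (a : ℝ → ℝ)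
    (ha : ∀ τ ∈ Set.Ioo (-1 : ℝ) 1, DifferentiableAt ℝ a τ)
    (ha' : ∀ τ ∈ Set.Ioo (-1 : ℝ) 1, DifferentiableAt ℝ (deriv a) τ) :
    ∀ τ ∈ Set.Ioo (-1 : ℝ) 1,
      jacobiD n α β (fun t => ((1 - t) / 2) ^ (-α) * a t) τ
        = ((1 - τ) / 2) ^ (-α) * jacobiD (n + α) (-α) β a τ := by
  intro τ hτ
  have hw : ∀ᶠ t in 𝓝 τ, DifferentiableAt ℝ (fun s => ((1 - s) / 2) ^ (-α)) t := by
    filter_upwards [Iio_mem_nhds hτ.2] with t ht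
    exact (hasDerivAt_half_one_sub_rpow (-α) ht).differentiableAt
  have hw' := hasDerivAt_deriv_half_one_sub_rpow (-α) hτ.2
  have hda : ∀ᶠ t in 𝓝 τ, DifferentiableAt ℝ a t :=
    eventually_of_mem (Ioo_mem_nhds hτ.1 hτ.2) ha
  rw [jacobiD, jacobiD, deriv_deriv_mul hw hda hw'.differentiableAt (ha' τ hτ),
    deriv_fun_mul hw.self_of_nhds hda.self_of_nhds, hw'.deriv,
    (hasDerivAt_half_one_sub_rpow (-α) hτ.2).deriv]
  have hne : 1 - τ ≠ 0 := by linarith [hτ.2]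
  field_simp
  ring
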